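/- arXiv:2206.08668 — 5 statements merged into one kernel-verified Lean document; each statement's English description precedes it below -/
import Mathlib

section
/- (Lefschetz principle) Let u be a nonprincipal ultrafilter on the set of prime numbers, and for each prime p let F_p^alg denote an algebraic closure of the field with p elements (e.g. AlgebraicClosure (ZMod p)). Then the ultraproduct ∏_u F_p^alg is isomorphic, as a ring (equivalently, as a field), to the field ℂ of complex numbers. -/
/-!
The ultraproduct `K` is a field, and it is algebraically closed because a monic polynomial over
`K` lifts to a monic polynomial over the product, which has a root componentwise. It has
characteristic zero since a fixed `n ≠ 0` vanishes in `𝔽_p^alg` only for the finitely many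
primes `p ∣ n`. Its cardinality is `𝔠`: at most `ℵ₀ ^ ℵ₀`, and at least `#(ℕ → Bool)` because
placing at each prime `p` a code for a prefix of a bit sequence, of length tending to infinity
with `p`, makes distinct sequences differ at all but finitely many primes. By Steinitz, an
uncountable algebraically closed field of characteristic zero is determined up to isomorphism
by its cardinality, so `K ≃+* ℂ`.
-/

/-- The ideal of the product ring `∀ w, A w` consisting of families that vanish
on a set belonging to the ultrafilter `u`. The quotient by this ideal is the
ultraproduct of the rings `A w` along `u`. -/
def ultraprodIdeal {W : Type*} (u : Ultrafilter W) (A : W → Type*)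
    [∀ w, CommRing (A w)] : Ideal (∀ w, A w) where
  carrier := {x | {w | x w = 0} ∈ u}
  zero_mem' := by
    have : {w | (0 : (∀ w, A w)) w = 0} = Set.univ := by ext w; simp
    rw [Set.mem_setOf_eq, this]
    exact u.toFilter.univ_mem
  add_mem' := by
    intro a b ha hb
    refine u.toFilter.mem_of_superset (Filter.inter_mem ha hb) ?_
    rintro w ⟨h1, h2⟩
    simp only [Set.mem_setOf_eq] at *
    rw [Pi.add_apply, h1, h2, add_zero]
  smul_mem' := by
    intro c x hx
    refine u.toFilter.mem_of_superset hx ?_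
    intro w hw
    simp only [Set.mem_setOf_eq] at *
    rw [smul_eq_mul, Pi.mul_apply, hw, mul_zero]

instance (p : Nat.Primes) : Fact (p : ℕ).Prime := ⟨p.2⟩

open Cardinal Filter Polynomial

theorem Pi.exists_eval_eq_zero_of_monic {W : Type*} {A : W → Type*} [∀ w, Field (A w)]
    [∀ w, IsAlgClosed (A w)] {q : (∀ w, A w)[X]} (hq : q.Monic) (hdeg : 0 < q.natDegree) :
    ∃ r, q.eval r = 0 := by
  have hroot (w : W) : ∃ r, (q.map (Pi.evalRingHom A w)).eval r = 0 :=
    IsAlgClosed.exists_root _ <| by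
      rw [degree_eq_natDegree (hq.map _).ne_zero, hq.natDegree_map]
      exact_mod_cast hdeg.ne'
  choose r hr using hroot
  refine ⟨r, funext fun w => ?_⟩
  rw [Pi.zero_apply, ← hr w, eval_map]
  exact (eval₂_at_apply (Pi.evalRingHom A w) r).symm

theorem IsAlgClosed.of_surjective {R K : Type*} [CommRing R] [Field K] {f : R →+* K}
    (hf : Function.Surjective f)
    (hR : ∀ q : R[X], q.Monic → 0 < q.natDegree → ∃ r, q.eval r = 0) : IsAlgClosed K := by
  refine IsAlgClosed.of_exists_root _ fun p hp hirr => ?_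
  obtain ⟨q, rfl, hdeg, hq⟩ := lifts_and_natDegree_eq_and_monic (mem_lifts_of_surjective hf p) hp
  obtain ⟨r, hr⟩ := hR q hq (hdeg ▸ hirr.natDegree_pos)
  exact ⟨f r, by rw [eval_map, eval₂_at_apply, hr, map_zero]⟩

instance {k : Type*} [Field k] [Countable k] : Countable (AlgebraicClosure k) :=
  mk_le_aleph0_iff.1 <|
    (Algebra.IsAlgebraic.cardinalMk_le_max k _).trans (max_le mk_le_aleph0 le_rfl)

section Ultraproduct

variable {W : Type*} (u : Ultrafilter W) (A : W → Type*)

section CommRing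

variable [∀ w, CommRing (A w)]

theorem ultraprodIdeal_mk_eq_mk_iff {x y : ∀ w, A w} :
    Ideal.Quotient.mk (ultraprodIdeal u A) x = Ideal.Quotient.mk (ultraprodIdeal u A) y ↔
      ∀ᶠ w in u, x w = y w := by
  rw [Ideal.Quotient.eq]
  show {w | (x - y) w = 0} ∈ u ↔ _
  simp only [Pi.sub_apply, sub_eq_zero]
  rfl

theorem ultraprod_charZero (h : ∀ n : ℕ, n ≠ 0 → ∀ᶠ w in u, (n : A w) ≠ 0) :
    CharZero ((∀ w, A w) ⧸ ultraprodIdeal u A) := by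
  refine charZero_of_inj_zero fun n hn => ?_
  by_contra hn0
  rw [← map_natCast (Ideal.Quotient.mk _), ← map_zero (Ideal.Quotient.mk _),
    ultraprodIdeal_mk_eq_mk_iff] at hn
  exact ((h n hn0).and hn).exists.elim fun w hw => hw.1 hw.2

theorem mk_ultraprod_le_continuum [Countable W] [∀ w, Countable (A w)] :
    #((∀ w, A w) ⧸ ultraprodIdeal u A) ≤ 𝔠 :=
  calc #((∀ w, A w) ⧸ ultraprodIdeal u A)
      ≤ #(∀ w, A w) := mk_le_of_surjective Ideal.Quotient.mk_surjective
    _ = prod fun w => #(A w) := mk_pi A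
    _ ≤ prod fun _ : W => ℵ₀ := prod_le_prod _ _ fun _ => mk_le_aleph0
    _ ≤ ℵ₀ ^ ℵ₀ := by
      rw [prod_const, lift_aleph0]
      exact power_le_power_left aleph0_ne_zero (lift_le_aleph0.2 mk_le_aleph0)
    _ = 𝔠 := aleph0_power_aleph0

theorem exists_seqs_eventually_ne :
    ∃ c : (ℕ → Bool) → ℕ → ℕ, ∀ f g, f ≠ g → ∀ᶠ n in atTop, c f n ≠ c g n := by
  refine ⟨fun f n => Encodable.encode (List.ofFn fun i : Fin (n + 1) => f i), fun f g hfg => ?_⟩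
  obtain ⟨k, hk⟩ := Function.ne_iff.1 hfg
  filter_upwards [eventually_ge_atTop k] with n hn heq
  exact hk (congrFun (List.ofFn_inj.1 (Encodable.encode_injective heq)) ⟨k, by omega⟩)

theorem continuum_le_mk_ultraprod (hu : (u : Filter W) ≤ cofinite) [Countable W]
    [∀ w, Infinite (A w)] : 𝔠 ≤ #((∀ w, A w) ⧸ ultraprodIdeal u A) := by
  obtain ⟨c, hc⟩ := exists_seqs_eventually_ne
  obtain ⟨ι, hι⟩ := Countable.exists_injective_nat W
  have hιu : Tendsto ι u atTop := (hι.tendsto_cofinite.mono_left hu).trans Nat.cofinite_eq_atTop.le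
  let x (f : ℕ → Bool) : ∀ w, A w := fun w => Infinite.natEmbedding (A w) (c f (ι w))
  have hx : Function.Injective fun f => Ideal.Quotient.mk (ultraprodIdeal u A) (x f) := by
    intro f g hfg
    by_contra hne
    rw [ultraprodIdeal_mk_eq_mk_iff] at hfg
    obtain ⟨w, hw, heq⟩ := ((hιu.eventually (hc f g hne)).and hfg).exists
    exact hw ((Infinite.natEmbedding (A w)).injective heq)
  simpa [mk_arrow, two_power_aleph0] using lift_mk_le_lift_mk_of_injective hx

end CommRing

variable [∀ w, Field (A w)]

instance : (ultraprodIdeal u A).IsMaximal := by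
  refine Ideal.Quotient.maximal_of_isField _ ⟨⟨0, 1, fun h => ?_⟩, mul_comm, fun {a} ha => ?_⟩
  · rw [← map_zero (Ideal.Quotient.mk _), ← map_one (Ideal.Quotient.mk _),
      ultraprodIdeal_mk_eq_mk_iff] at h
    exact h.exists.elim fun w hw => zero_ne_one hw
  · obtain ⟨x, rfl⟩ := Ideal.Quotient.mk_surjective a
    rw [← map_zero (Ideal.Quotient.mk _), Ne, ultraprodIdeal_mk_eq_mk_iff,
      ← Ultrafilter.eventually_not] at ha
    refine ⟨Ideal.Quotient.mk _ fun w => (x w)⁻¹, ?_⟩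
    rw [← map_mul, ← map_one (Ideal.Quotient.mk _), ultraprodIdeal_mk_eq_mk_iff]
    filter_upwards [ha] with w hw
    exact mul_inv_cancel₀ hw

noncomputable instance : Field ((∀ w, A w) ⧸ ultraprodIdeal u A) := Ideal.Quotient.field _

instance [∀ w, IsAlgClosed (A w)] : IsAlgClosed ((∀ w, A w) ⧸ ultraprodIdeal u A) :=
  .of_surjective Ideal.Quotient.mk_surjective fun _ => Pi.exists_eval_eq_zero_of_monic

end Ultraproduct

theorem Nat.Primes.eventually_natCast_ne_zero {A : Nat.Primes → Type*}
    [∀ p, AddMonoidWithOne (A p)] [∀ p, CharP (A p) p] {l : Filter Nat.Primes}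
    (hl : l ≤ cofinite) {n : ℕ} (hn : n ≠ 0) : ∀ᶠ p in l, (n : A p) ≠ 0 := by
  have : Tendsto ((↑) : Nat.Primes → ℕ) l atTop :=
    (Subtype.val_injective.tendsto_cofinite.mono_left hl).trans Nat.cofinite_eq_atTop.le
  filter_upwards [this.eventually_gt_atTop n] with p hp hzero
  exact (Nat.le_of_dvd (Nat.pos_of_ne_zero hn) ((CharP.cast_eq_zero_iff _ p n).1 hzero)).not_gt hp

/-- Lefschetz principle: for a nonprincipal ultrafilter `u` on the
set of prime numbers, the ultraproduct of the algebraic closures of the prime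
fields `𝔽_p` is isomorphic, as a ring, to the field `ℂ`. -/
theorem lefschetz_principle (u : Ultrafilter Nat.Primes)
    (hu : ∀ s : Set Nat.Primes, s.Finite → s ∉ u) :
    Nonempty
      (((∀ p : Nat.Primes, AlgebraicClosure (ZMod p)) ⧸
          ultraprodIdeal u fun p => AlgebraicClosure (ZMod p)) ≃+* ℂ) := by
  have hcof : (u : Filter Nat.Primes) ≤ cofinite := fun s hs =>
    Ultrafilter.compl_notMem_iff.1 (hu _ hs)
  have := ultraprod_charZero u _ fun _ =>
    Nat.Primes.eventually_natCast_ne_zero (A := fun p => AlgebraicClosure (ZMod p)) hcof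
  have hcard := (mk_ultraprod_le_continuum u fun p => AlgebraicClosure (ZMod p)).antisymm
    (continuum_le_mk_ultraprod u _ hcof)
  exact IsAlgClosed.ringEquiv_of_equiv_of_charZero (hcard ▸ aleph0_lt_continuum)
    (Cardinal.eq.1 (hcard.trans mk_complex.symm))
end

section
/- Let W be a countably infinite set, u a nonprincipal ultrafilter on W, and (A_w)_{w∈W} a family of countably infinite sets. Then the ultraproduct ∏_u A_w, i.e. the quotient of ∏_{w∈W} A_w by the equivalence relation identifying (a_w) and (b_w) when {w ∈ W : a_w = b_w} ∈ u, has cardinality 2^{ℵ₀} (the cardinality of the continuum). -/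
/-!
The product of countably many countable sets has at most `𝔠` elements, hence so does its quotient.
Conversely, enumerate `W` injectively as `n : W → ℕ` and send `x : ℕ → Bool` to the family whose
`w`-th entry encodes the first `n w` values of `x` in `A w`. Two distinct sequences differing at `k`
give families that differ wherever `k < n w`, a cofinite set, hence a set in the nonprincipal
ultrafilter `u`; so this is an injection of `ℕ → Bool` into the ultraproduct.
-/

/-- The equivalence relation on the product `∀ w, A w` identifying two families
that agree on a set belonging to the ultrafilter `u`. The quotient is the
ultraproduct `∏_u A w`. -/
def ultraSetoid {W : Type*} (u : Ultrafilter W) (A : W → Type*) :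
    Setoid (∀ w, A w) where
  r a b := {w | a w = b w} ∈ u
  iseqv := by
    refine ⟨fun a => ?_, fun {a b} h => ?_, fun {a b c} h1 h2 => ?_⟩
    · have : {w | a w = a w} = Set.univ := by ext w; simp
      rw [this]; exact u.toFilter.univ_mem
    · refine u.toFilter.mem_of_superset h fun w hw => ?_
      exact (hw : a w = b w).symm
    · refine u.toFilter.mem_of_superset (Filter.inter_mem h1 h2) ?_
      rintro w ⟨hw1, hw2⟩
      exact (hw1 : a w = b w).trans hw2

open Filter Cardinal Function

theorem Cardinal.mk_pi_le_continuum {W : Type*} [Countable W] (A : W → Type*)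
    [∀ w, Countable (A w)] : #(∀ w, A w) ≤ 𝔠 := by
  calc #(∀ w, A w) ≤ prod fun _ : W => ℵ₀ := mk_pi A ▸ prod_le_prod _ _ fun _ => mk_le_aleph0
    _ = ℵ₀ ^ lift #W := by rw [prod_const, lift_aleph0]
    _ ≤ ℵ₀ ^ ℵ₀ := power_le_power_left aleph0_ne_zero (lift_le_aleph0.2 mk_le_aleph0)
    _ = 𝔠 := aleph0_power_aleph0

theorem Ultrafilter.tendsto_atTop_of_injective {W : Type*} {u : Ultrafilter W}
    (hu : ∀ s : Set W, s.Finite → s ∉ u) {n : W → ℕ} (hn : Injective n) :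
    Tendsto n u atTop := by
  have hcof : (u : Filter W) ≤ cofinite := fun s hs =>
    compl_compl s ▸ Ultrafilter.compl_mem_iff_notMem.2 (hu _ hs)
  exact Nat.cofinite_eq_atTop ▸ hn.tendsto_cofinite.mono_left hcof

section

variable {W : Type*} (u : Ultrafilter W) (A : W → Type*)

theorem injective_ultraproduct_mk_restrict {β : Type*} {n : W → ℕ} (hn : Tendsto n u atTop)
    {c : ∀ w, (Fin (n w) → β) → A w} (hc : ∀ w, Injective (c w)) :
    Injective fun x : ℕ → β => Quotient.mk (ultraSetoid u A) fun w => c w fun i => x i := by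
  intro x y hxy
  funext k
  have hagree : ∀ᶠ w in (u : Filter W), (c w fun i => x i) = c w fun i => y i :=
    Quotient.exact hxy
  obtain ⟨w, hw, hkw⟩ := (hagree.and (hn.eventually_gt_atTop k)).exists
  exact congrFun (hc w hw) ⟨k, hkw⟩

theorem continuum_le_mk_ultraproduct [Countable W] (hu : ∀ s : Set W, s.Finite → s ∉ u)
    [∀ w, Infinite (A w)] : 𝔠 ≤ #(Quotient (ultraSetoid u A)) := by
  obtain ⟨n, hn⟩ := Countable.exists_injective_nat W
  have hc (w : W) : ∃ c : (Fin (n w) → Bool) → A w, Injective c := by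
    obtain ⟨e, he⟩ := Countable.exists_injective_nat (Fin (n w) → Bool)
    exact ⟨Infinite.natEmbedding (A w) ∘ e, (Infinite.natEmbedding (A w)).injective.comp he⟩
  choose c hc using hc
  simpa using lift_mk_le'.2
    ⟨⟨_, injective_ultraproduct_mk_restrict u A (Ultrafilter.tendsto_atTop_of_injective hu hn) hc⟩⟩

end

theorem card_ultraproduct_countable_general {W : Type*} [Countable W]
    (u : Ultrafilter W) (hu : ∀ s : Set W, s.Finite → s ∉ u)
    (A : W → Type*) [∀ w, Countable (A w)] [∀ w, Infinite (A w)] :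
    Cardinal.mk (Quotient (ultraSetoid u A)) = 2 ^ Cardinal.aleph0 := by
  rw [two_power_aleph0]
  exact le_antisymm (mk_quotient_le.trans (mk_pi_le_continuum A))
    (continuum_le_mk_ultraproduct u A hu)

/-- for a nonprincipal ultrafilter `u` on a countably infinite set
`W` and a family of countably infinite sets `A w`, the ultraproduct `∏_u A w`
has the cardinality of the continuum, `2^ℵ₀`. -/
theorem card_ultraproduct_countable {W : Type*} [Countable W] [Infinite W]
    (u : Ultrafilter W) (hu : ∀ s : Set W, s.Finite → s ∉ u)
    (A : W → Type*) [∀ w, Countable (A w)] [∀ w, Infinite (A w)] :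
    Cardinal.mk (Quotient (ultraSetoid u A)) = 2 ^ Cardinal.aleph0 :=
  card_ultraproduct_countable_general u hu A
end

section
/- Let R and S be commutative integral domains, and let R → S be an injective ring homomorphism that is faithfully flat (i.e. S is a faithfully flat R-module). If S is integrally closed in its field of fractions, then R is integrally closed in its field of fractions. -/
/-!
If `x = a / b` in the fraction field of `R` is integral over `R`, its image in the fraction field
of `S` is integral over `S`, hence lies in `S`: `a = s * b` for some `s : S`. Faithful flatness
gives `bS ∩ R = bR`, so `b ∣ a` already in `R` and `x ∈ R`.
-/

open scoped nonZeroDivisors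

section

variable {R S : Type*} [CommRing R] [CommRing S] [Algebra R S]

theorem Module.FaithfullyFlat.dvd_of_algebraMap_dvd [Module.FaithfullyFlat R S] {a b : R}
    (h : algebraMap R S b ∣ algebraMap R S a) : b ∣ a := by
  rwa [← Ideal.mem_span_singleton,
    ← Ideal.comap_map_eq_self_of_faithfullyFlat (B := S) (Ideal.span {b}), Ideal.mem_comap, Ideal.map_span, Set.image_singleton, Ideal.mem_span_singleton]

theorem IsIntegrallyClosed.of_injective_of_dvd_of_algebraMap_dvd [IsDomain R] [IsDomain S]
    [IsIntegrallyClosed S] (hinj : Function.Injective (algebraMap R S))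
    (hdvd : ∀ a b : R, algebraMap R S b ∣ algebraMap R S a → b ∣ a) :
    IsIntegrallyClosed R := by
  rw [isIntegrallyClosed_iff (FractionRing R)]
  intro x hx
  have hle : R⁰ ≤ S⁰.comap (algebraMap R S) :=
    nonZeroDivisors_le_comap_nonZeroDivisors_of_injective _ hinj
  let φ : FractionRing R →+* FractionRing S := IsLocalization.map (FractionRing S) _ hle
  have hφ (r : R) : φ (algebraMap R _ r) = algebraMap S _ (algebraMap R S r) :=
    IsLocalization.map_eq hle r
  have hφx : IsIntegral S (φ x) :=
    hx.map_of_comp_eq (algebraMap R S) φ (IsLocalization.map_comp hle).symm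
  obtain ⟨s, hs⟩ := IsIntegrallyClosed.isIntegral_iff.mp hφx
  obtain ⟨a, b, hb, rfl⟩ := IsFractionRing.div_surjective (A := R) x
  have hbS : algebraMap R S b ≠ 0 := (map_ne_zero_iff _ hinj).mpr (nonZeroDivisors.ne_zero hb)
  have has : algebraMap R S a = s * algebraMap R S b := by
    apply IsFractionRing.injective S (FractionRing S)
    rw [map_mul, hs, map_div₀, hφ, hφ, div_mul_cancel₀]
    exact (map_ne_zero_iff _ (IsFractionRing.injective S _)).mpr hbS
  obtain ⟨r, rfl⟩ := hdvd a b ⟨s, by rw [has, mul_comm]⟩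
  refine ⟨r, ?_⟩
  rw [map_mul, mul_div_cancel_left₀]
  exact (map_ne_zero_iff _ (IsFractionRing.injective R _)).mpr (nonZeroDivisors.ne_zero hb)

end

theorem isIntegrallyClosed_of_faithfullyFlat_general {R S : Type*} [CommRing R] [IsDomain R]
    [CommRing S] [IsDomain S] [Algebra R S]
    (hff : Module.FaithfullyFlat R S)
    (hS : IsIntegrallyClosed S) : IsIntegrallyClosed R :=
  have := hff
  IsIntegrallyClosed.of_injective_of_dvd_of_algebraMap_dvd
    (FaithfulSMul.algebraMap_injective R S) fun _ _ ↦ Module.FaithfullyFlat.dvd_of_algebraMap_dvd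

/-- if `R → S` is an injective, faithfully flat ring homomorphism
between integral domains and `S` is integrally closed (in its fraction field),
then `R` is integrally closed (in its fraction field). -/
theorem isIntegrallyClosed_of_faithfullyFlat {R S : Type*} [CommRing R] [IsDomain R]
    [CommRing S] [IsDomain S] [Algebra R S]
    (hinj : Function.Injective (algebraMap R S))
    (hff : Module.FaithfullyFlat R S)
    (hS : IsIntegrallyClosed S) : IsIntegrallyClosed R :=
  isIntegrallyClosed_of_faithfullyFlat_general hff hS
end

section
/- Let R be a commutative ring, W a set, u an ultrafilter on W, and let R_∗ = R^W/u denote the ultrapower of R, which is an R-algebra via the diagonal map. For every finitely presented R-module M, the natural R_∗-linear map M ⊗_R R_∗ → M^W/u, sending m ⊗ (class of (r_w)) to the class of (r_w • m), is bijective. -/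
/-!
Both `M ↦ Germ l R ⊗[R] M` and `M ↦ Germ l M` are right exact: the first as any tensor product,
the second (for any filter `l`) because preimages can be chosen pointwise. The natural map between
them is an isomorphism for `M = R^n`, since germs commute with finite products, so a finite
presentation `R^m → R^n → M → 0` and the five lemma give the general case.
-/

open Filter TensorProduct

instance germSMulCommClass {W R : Type*} [CommRing R] (l : Filter W) :
    SMulCommClass R (Filter.Germ l R) (Filter.Germ l R) where
  smul_comm r c x := by
    refine Filter.Germ.inductionOn₂ c x fun c x => ?_
    show r • ((↑c : Filter.Germ l R) • (↑x : Filter.Germ l R)) =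
      (↑c : Filter.Germ l R) • (r • (↑x : Filter.Germ l R))
    rw [← Filter.Germ.coe_smul' c x, ← Filter.Germ.coe_smul r,
      ← Filter.Germ.coe_smul r, ← Filter.Germ.coe_smul' c]
    congr 1
    funext w
    simp only [Pi.smul_apply, Pi.mul_apply, smul_eq_mul]
    ring

namespace Filter.Germ

variable {W R : Type*} [CommRing R] {l : Filter W} {M N : Type*} [AddCommGroup M] [Module R M]
  [AddCommGroup N] [Module R N]

-- Not a global instance: it would change the `Germ l R`-module structure that
-- `Germ l R ⊗[R] M` is elaborated with.
variable (l R) in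
abbrev algebra : Algebra R (Germ l R) where
  algebraMap := (coeRingHom l).comp (Pi.constRingHom W R)
  commutes' _ _ := mul_comm _ _
  smul_def' r x := inductionOn x fun x => congrArg ofFun (funext fun w => smul_eq_mul r (x w))

instance : IsScalarTower R (Germ l R) (Germ l M) where
  smul_assoc r c x := inductionOn₂ c x fun c x => by norm_cast; simp [smul_assoc]

attribute [local instance] algebra

variable (R l M) in
def constLinearMap : M →ₗ[R] Germ l M where
  toFun m := ↑m
  map_add' _ _ := rfl
  map_smul' _ _ := rfl

def mapLinearMap (f : M →ₗ[R] N) : Germ l M →ₗ[Germ l R] Germ l N where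
  toFun := map f
  map_add' x y := inductionOn₂ x y fun x y =>
    congrArg ofFun (funext fun w => f.map_add (x w) (y w))
  map_smul' c x := inductionOn₂ c x fun c x =>
    congrArg ofFun (funext fun w => f.map_smul (c w) (x w))

theorem constLinearMap_comp (f : M →ₗ[R] N) :
    constLinearMap R l N ∘ₗ f = (mapLinearMap f).restrictScalars R ∘ₗ constLinearMap R l M := by
  ext
  rfl

theorem exact_mapLinearMap {P : Type*} [AddCommGroup P] [Module R P] {f : M →ₗ[R] N}
    {g : N →ₗ[R] P} (hfg : Function.Exact f g) :
    Function.Exact (mapLinearMap (l := l) f) (mapLinearMap (l := l) g) := by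
  intro y
  constructor
  · induction y using inductionOn with | h y => ?_
    intro hy
    have hrange : ∀ᶠ w in l, y w ∈ Set.range f := (coe_eq.mp hy).mono fun w hw => (hfg _).mp hw
    exact ⟨↑(Function.invFun f ∘ y), coe_eq.mpr (hrange.mono fun w hw => Function.invFun_eq hw)⟩
  · rintro ⟨x, rfl⟩
    induction x using inductionOn with | h x => ?_
    exact congrArg ofFun (funext fun w => hfg.apply_apply_eq_zero (x w))

theorem surjective_mapLinearMap {g : M →ₗ[R] N} (hg : Function.Surjective g) :
    Function.Surjective (mapLinearMap (l := l) g) := fun y =>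
  inductionOn y fun y => ⟨↑(Function.invFun g ∘ y),
    congrArg ofFun (funext fun w => Function.invFun_eq (hg (y w)))⟩

variable (R l M) in
noncomputable def piLinearEquiv (ι : Type*) [Finite ι] :
    Germ l (ι → M) ≃ₗ[Germ l R] (ι → Germ l M) :=
  LinearEquiv.ofBijective
    (LinearMap.pi fun i => mapLinearMap (LinearMap.proj i : (ι → M) →ₗ[R] M))
    ⟨(injective_iff_map_eq_zero _).mpr fun y => inductionOn y fun _ hx => coe_eq.mpr <|
      (eventually_all.mpr fun i => coe_eq.mp (congrFun hx i)).mono fun _ hw => funext hw,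
      fun F => ⟨↑(fun w i => (F i).out w), funext fun i => Quotient.out_eq (F i)⟩⟩

variable (l) in
theorem isBaseChange_constLinearMap_pi (ι : Type*) [Finite ι] :
    IsBaseChange (Germ l R) (constLinearMap R l (ι → R)) :=
  (IsBaseChange.iff_of_equiv_comm (LinearEquiv.refl R (ι → R)) (piLinearEquiv R l R ι)
    (LinearMap.ext fun _ => rfl)).mpr ((IsBaseChange.linearMap R (Germ l R)).finitePow ι)

variable (l M) in
theorem isBaseChange_constLinearMap [Module.FinitePresentation R M] :
    IsBaseChange (Germ l R) (constLinearMap R l M) := by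
  obtain ⟨n, m, g, f, hg, hfg⟩ := Module.FinitePresentation.exists_fin' R M
  exact IsBaseChange.of_right_exact (Germ l R) _ _ _
    (constLinearMap_comp f) (constLinearMap_comp g)
    (isBaseChange_constLinearMap_pi l _) (isBaseChange_constLinearMap_pi l _) hfg hg
    (exact_mapLinearMap hfg) (surjective_mapLinearMap hg)

end Filter.Germ

/-- for a commutative ring `R`, an ultrafilter `u` on a set `W` and
a finitely presented `R`-module `M`, the natural `R^W/u`-linear map
`M ⊗_R R^W/u → M^W/u`, sending `m ⊗ (class of (r_w))` to the class of
`(r_w • m)`, is bijective. (The ultrapower `R^W/u` is `(u : Filter W).Germ R`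
and `M^W/u` is `(u : Filter W).Germ M`.) -/
theorem tensor_ultrapower_bijective {R : Type*} [CommRing R] {W : Type*}
    (u : Ultrafilter W) (M : Type*) [AddCommGroup M] [Module R M]
    [Module.FinitePresentation R M] :
    ∃ φ : (((u : Filter W).Germ R) ⊗[R] M) →ₗ[(u : Filter W).Germ R]
        (u : Filter W).Germ M,
      (∀ (m : M) (r : W → R),
        φ ((↑r : (u : Filter W).Germ R) ⊗ₜ[R] m) =
          (↑(fun w => r w • m) : (u : Filter W).Germ M)) ∧
      Function.Bijective φ := by
  let := Germ.algebra R (u : Filter W)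
  have h := Germ.isBaseChange_constLinearMap (R := R) (u : Filter W) M
  exact ⟨h.equiv.toLinearMap, fun m r => h.equiv_tmul _ m, h.equiv.bijective⟩
end

section
/- Let R be a commutative ring and S a commutative R-algebra which is finite as an R-module. Let W be a set, u an ultrafilter on W, and (I_w)_{w∈W} a family of ideals of R. In the ultrapower ring S^W/u, the set J_S of classes of families (x_w) with x_w ∈ I_w·S for almost all w is an ideal, and it equals the extension along the induced ring homomorphism R^W/u → S^W/u of the ideal J_R of R^W/u consisting of classes of families (y_w) with y_w ∈ I_w for almost all w. Equivalently, if ζ₁, …, ζ_l generate S as an R-module, every element of J_S can be written as Σ_{i=1}^l a_i·ζ_i with a_i ∈ J_R. -/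
open Filter

/-- For an ultrafilter `u` on `W` and a family of ideals `J w` of a commutative
ring `A`, the ideal of the ultrapower `A^W/u` consisting of classes of families
`(x_w)` with `x_w ∈ J w` for almost all `w`. -/
def germIdeal {W A : Type*} [CommRing A] (u : Ultrafilter W) (J : W → Ideal A) :
    Ideal ((u : Filter W).Germ A) where
  carrier := {x | ∃ f : W → A, x = ↑f ∧ ∀ᶠ w in (u : Filter W), f w ∈ J w}
  zero_mem' :=
    ⟨0, (Filter.Germ.coe_zero (l := (u : Filter W))).symm,
      Filter.Eventually.of_forall fun w => (J w).zero_mem⟩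
  add_mem' := by
    rintro x y ⟨f, rfl, hf⟩ ⟨g, rfl, hg⟩
    exact ⟨f + g, (Filter.Germ.coe_add f g).symm,
      (hf.and hg).mono fun w hw => (J w).add_mem hw.1 hw.2⟩
  smul_mem' := by
    intro c x hx
    obtain ⟨f, rfl, hf⟩ := hx
    refine Filter.Germ.inductionOn c fun g => ?_
    show (↑g : (u : Filter W).Germ A) • (↑f : (u : Filter W).Germ A) ∈ _
    rw [smul_eq_mul, ← Filter.Germ.coe_mul]
    exact ⟨g * f, rfl, hf.mono fun w hw => Ideal.mul_mem_left (J w) (g w) hw⟩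

/-- The ring homomorphism `R^W/u →+* S^W/u` between ultrapowers induced
componentwise by a ring homomorphism `f : R →+* S`. -/
def germRingHom {W R S : Type*} [CommRing R] [CommRing S] (u : Ultrafilter W)
    (f : R →+* S) : (u : Filter W).Germ R →+* (u : Filter W).Germ S where
  toFun := Filter.Germ.map f
  map_one' := by
    rw [← Filter.Germ.coe_one, Filter.Germ.map_coe]
    exact congrArg Filter.Germ.ofFun (funext fun w => map_one f)
  map_mul' x y := by
    refine Filter.Germ.inductionOn₂ x y fun a b => ?_
    show Filter.Germ.map (⇑f) (Filter.Germ.ofFun a * Filter.Germ.ofFun b) =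
      Filter.Germ.map (⇑f) (Filter.Germ.ofFun a) *
        Filter.Germ.map (⇑f) (Filter.Germ.ofFun b)
    rw [← Filter.Germ.coe_mul, Filter.Germ.map_coe, Filter.Germ.map_coe,
      Filter.Germ.map_coe, ← Filter.Germ.coe_mul]
    exact congrArg Filter.Germ.ofFun
      (funext fun w => by simp [Function.comp, map_mul])
  map_zero' := by
    show Filter.Germ.map (⇑f) (Filter.Germ.ofFun (0 : W → R)) = 0
    rw [Filter.Germ.map_coe, ← Filter.Germ.coe_zero]
    exact congrArg Filter.Germ.ofFun (funext fun w => map_zero f)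
  map_add' x y := by
    refine Filter.Germ.inductionOn₂ x y fun a b => ?_
    show Filter.Germ.map (⇑f) (Filter.Germ.ofFun a + Filter.Germ.ofFun b) =
      Filter.Germ.map (⇑f) (Filter.Germ.ofFun a) +
        Filter.Germ.map (⇑f) (Filter.Germ.ofFun b)
    rw [← Filter.Germ.coe_add, Filter.Germ.map_coe, Filter.Germ.map_coe,
      Filter.Germ.map_coe, ← Filter.Germ.coe_add]
    exact congrArg Filter.Germ.ofFun
      (funext fun w => by simp [Function.comp, map_add])

/-
Write `I_w S` for the extension of `I_w` to `S`. If `ζ₁, …, ζ_l` generate `S` as an `R`-module,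
then `I_w S = Σ I_w ζ_i`, so every `x_w ∈ I_w S` can be written `Σ b_{w,i} ζ_i` with
`b_{w,i} ∈ I_w`. Choosing such coefficients for each `w` (arbitrarily where `x_w ∉ I_w S`) and
passing to germs gives `x = Σ a_i ζ_i` with `a_i ∈ J_R`, since the number `l` of generators does
not depend on `w`. This gives `J_S ≤ J_R S`; the reverse inclusion holds componentwise.
-/

section

variable {W R S : Type*} [CommRing R] [CommRing S]

@[simp]
lemma germRingHom_coe (u : Ultrafilter W) (f : R →+* S) (g : W → R) :
    germRingHom u f (g : (u : Filter W).Germ R) = ↑(fun w => f (g w)) :=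
  rfl

lemma Filter.Germ.coe_sum {α ι M : Type*} {l : Filter α} [AddCommMonoid M] (s : Finset ι)
    (g : ι → α → M) : ((∑ i ∈ s, g i : α → M) : l.Germ M) = ∑ i ∈ s, (g i : l.Germ M) :=
  map_sum (Germ.coeAddHom l) g s

lemma map_germIdeal_le (u : Ultrafilter W) (f : R →+* S) (I : W → Ideal R) :
    Ideal.map (germRingHom u f) (germIdeal u I) ≤ germIdeal u (fun w => (I w).map f) := by
  rw [Ideal.map_le_iff_le_comap]
  rintro _ ⟨g, rfl, hg⟩
  exact ⟨fun w => f (g w), rfl, hg.mono fun w hw => Ideal.mem_map_of_mem f hw⟩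

lemma Ideal.exists_coeffs_of_mem_map_algebraMap [Algebra R S] {ι : Type*} [Fintype ι]
    {ζ : ι → S} (hζ : Submodule.span R (Set.range ζ) = ⊤) {I : Ideal R} {x : S}
    (hx : x ∈ I.map (algebraMap R S)) :
    ∃ b : ι → R, (∀ i, b i ∈ I) ∧ x = ∑ i, algebraMap R S (b i) * ζ i := by
  have hx' : x ∈ I • Submodule.span R (Set.range ζ) := by
    rwa [hζ, Ideal.smul_top_eq_map]
  rw [Submodule.mem_ideal_smul_span_iff_exists_sum] at hx'
  obtain ⟨b, hb, rfl⟩ := hx'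
  refine ⟨b, hb, ?_⟩
  rw [Finsupp.sum_fintype _ _ fun i => zero_smul R (ζ i)]
  simp only [Algebra.smul_def]

lemma exists_coeffs_of_mem_germIdeal_map_algebraMap [Algebra R S] (u : Ultrafilter W)
    (I : W → Ideal R) {ι : Type*} [Fintype ι] {ζ : ι → S}
    (hζ : Submodule.span R (Set.range ζ) = ⊤) {x : (u : Filter W).Germ S}
    (hx : x ∈ germIdeal u (fun w => (I w).map (algebraMap R S))) :
    ∃ a : ι → (u : Filter W).Germ R, (∀ i, a i ∈ germIdeal u I) ∧
      x = ∑ i, germRingHom u (algebraMap R S) (a i) * ↑(fun _ : W => ζ i) := by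
  obtain ⟨f, rfl, hf⟩ := hx
  have coeffs : ∀ w, ∃ b : ι → R, f w ∈ (I w).map (algebraMap R S) →
      (∀ i, b i ∈ I w) ∧ f w = ∑ i, algebraMap R S (b i) * ζ i := by
    intro w
    by_cases hw : f w ∈ (I w).map (algebraMap R S)
    · obtain ⟨b, hb⟩ := Ideal.exists_coeffs_of_mem_map_algebraMap hζ hw
      exact ⟨b, fun _ => hb⟩
    · exact ⟨0, fun h => absurd h hw⟩
  choose b hb using coeffs
  refine ⟨fun i => ↑(fun w => b w i), fun i => ⟨_, rfl, hf.mono fun w hw => (hb w hw).1 i⟩, ?_⟩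
  simp only [germRingHom_coe, ← Germ.coe_mul, ← Germ.coe_sum]
  exact Germ.coe_eq.mpr (hf.mono fun w hw => by
    simpa only [Finset.sum_apply, Pi.mul_apply] using (hb w hw).2)

lemma germIdeal_map_algebraMap_le [Algebra R S] (u : Ultrafilter W) (I : W → Ideal R)
    {ι : Type*} [Fintype ι] {ζ : ι → S} (hζ : Submodule.span R (Set.range ζ) = ⊤) :
    germIdeal u (fun w => (I w).map (algebraMap R S)) ≤
      Ideal.map (germRingHom u (algebraMap R S)) (germIdeal u I) := by
  intro x hx
  obtain ⟨a, ha, rfl⟩ := exists_coeffs_of_mem_germIdeal_map_algebraMap u I hζ hx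
  exact Ideal.sum_mem _ fun i _ => Ideal.mul_mem_right _ _ (Ideal.mem_map_of_mem _ (ha i))

end

/-- let `S` be a commutative `R`-algebra which is finite as an
`R`-module, `u` an ultrafilter on `W` and `(I w)` a family of ideals of `R`.
The ideal `J_S` of `S^W/u` of classes of families `(x_w)` with `x_w ∈ I_w·S`
almost everywhere equals the extension, along the induced map `R^W/u → S^W/u`,
of the ideal `J_R` of classes of families `(y_w)` with `y_w ∈ I_w` almost
everywhere. Equivalently, if `ζ₁, …, ζ_l` generate `S` as an `R`-module, then
every element of `J_S` is of the form `Σ aᵢ·ζᵢ` with `aᵢ ∈ J_R`. -/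
theorem germIdeal_map_algebra {R S : Type*} [CommRing R] [CommRing S]
    [Algebra R S] [Module.Finite R S] {W : Type*} (u : Ultrafilter W)
    (I : W → Ideal R) :
    germIdeal u (fun w => (I w).map (algebraMap R S)) =
        Ideal.map (germRingHom u (algebraMap R S)) (germIdeal u I) ∧
      ∀ (l : ℕ) (ζ : Fin l → S), Submodule.span R (Set.range ζ) = ⊤ →
        ∀ x ∈ germIdeal u (fun w => (I w).map (algebraMap R S)),
          ∃ a : Fin l → (u : Filter W).Germ R,
            (∀ i, a i ∈ germIdeal u I) ∧
            x = ∑ i, germRingHom u (algebraMap R S) (a i) *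
              (↑(fun _ : W => ζ i) : (u : Filter W).Germ S) := by
  obtain ⟨l, ζ, hζ⟩ := Module.Finite.exists_fin (R := R) (M := S)
  exact ⟨le_antisymm (germIdeal_map_algebraMap_le u I hζ) (map_germIdeal_le u _ I),
    fun _ _ hζ _ hx => exists_coeffs_of_mem_germIdeal_map_algebraMap u I hζ hx⟩
end
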